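/- arXiv:1903.04048 — 8 statements merged into one kernel-verified Lean document; each statement's English description precedes it below -/
import Mathlib

section
/- For the electric-vehicle vector fields F₀ and F₁ one has, for every x ∈ ℝ³: F₀₁(x) = −c₇(c₁, 0, c₅), F₀₀₁(x) = c₇(c₁² + c₂c₅, c₃c₅, c₅(c₁ + 2c₆x₃)), F₁₀₁(x) = 0, F₁₀₀₁(x) = 0, and F₁₀₀₀₁(x) = (0, 0, 2c₅²c₆c₇²). -/
noncomputable section

/-- Lie bracket of vector fields on ℝ³: `[F,G](x) = G'(x)F(x) − F'(x)G(x)`. -/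
def lieBracket (F G : (Fin 3 → ℝ) → (Fin 3 → ℝ)) (x : Fin 3 → ℝ) : Fin 3 → ℝ :=
  fderiv ℝ G x (F x) - fderiv ℝ F x (G x)

/-- Drift vector field of the electric vehicle. -/
def F0 (c1 c2 c3 c4 c5 c6 : ℝ) (x : Fin 3 → ℝ) : Fin 3 → ℝ :=
  ![c1 * x 0 + c2 * x 2, c3 * x 2, c4 + c5 * x 0 + c6 * (x 2) ^ 2]

/-- Control vector field of the electric vehicle. -/
def F1 (c7 : ℝ) (_x : Fin 3 → ℝ) : Fin 3 → ℝ := ![c7, 0, 0]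

/-! Brackets with the constant field `F₁` are directional derivatives, and every field in the
chain `F₀, F₀₀₁, F₀₀₀₁` has the form `a + y₀ b + y₂ c + y₂² d` with constant vectors `a b c d`,
whose derivative is explicit; each bracket is then a polynomial identity in the `cᵢ` and `x`. -/

lemma lieBracket_const_left (v : Fin 3 → ℝ) (G : (Fin 3 → ℝ) → (Fin 3 → ℝ)) (x : Fin 3 → ℝ) :
    lieBracket (fun _ => v) G x = fderiv ℝ G x v := by
  simp [lieBracket]

lemma lieBracket_const_right (F : (Fin 3 → ℝ) → (Fin 3 → ℝ)) (v : Fin 3 → ℝ) (x : Fin 3 → ℝ) :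
    lieBracket F (fun _ => v) x = -fderiv ℝ F x v := by
  simp [lieBracket]

def quadField (a b c d : Fin 3 → ℝ) (y : Fin 3 → ℝ) : Fin 3 → ℝ :=
  a + y 0 • b + y 2 • c + y 2 ^ 2 • d

lemma fderiv_quadField_apply (a b c d x v : Fin 3 → ℝ) :
    fderiv ℝ (quadField a b c d) x v = v 0 • b + v 2 • c + (2 * x 2 * v 2) • d := by
  have hy (i : Fin 3) := hasFDerivAt_apply (𝕜 := ℝ) i x
  have hx : HasFDerivAt (quadField a b c d) _ x :=
    (((hasFDerivAt_const a x).add ((hy 0).smul_const b)).add ((hy 2).smul_const c)).add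
      (((hy 2).pow 2).smul_const d)
  rw [hx.fderiv]
  simp

section Brackets

variable (c1 c2 c3 c4 c5 c6 c7 : ℝ)

lemma F0_eq_quadField :
    F0 c1 c2 c3 c4 c5 c6 = quadField ![0, 0, c4] ![c1, 0, c5] ![c2, c3, 0] ![0, 0, c6] := by
  funext y i
  fin_cases i <;> simp [F0, quadField] <;> ring

lemma F1_eq_const : F1 c7 = fun _ => ![c7, 0, 0] := rfl

lemma fderiv_F0_apply (x v : Fin 3 → ℝ) :
    fderiv ℝ (F0 c1 c2 c3 c4 c5 c6) x v
      = ![c1 * v 0 + c2 * v 2, c3 * v 2, c5 * v 0 + 2 * c6 * x 2 * v 2] := by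
  rw [F0_eq_quadField, fderiv_quadField_apply]
  funext i
  fin_cases i <;> simp <;> ring

lemma lieBracket_F0_F1 :
    lieBracket (F0 c1 c2 c3 c4 c5 c6) (F1 c7) = fun _ => ![-(c7 * c1), 0, -(c7 * c5)] := by
  funext x
  rw [F1_eq_const, lieBracket_const_right, fderiv_F0_apply]
  funext i
  fin_cases i <;> simp <;> ring

lemma lieBracket_F0_F001 :
    lieBracket (F0 c1 c2 c3 c4 c5 c6) (lieBracket (F0 c1 c2 c3 c4 c5 c6) (F1 c7))
      = quadField ![c7 * (c1 ^ 2 + c2 * c5), c7 * (c3 * c5), c7 * (c5 * c1)] 0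
          ![0, 0, 2 * c5 * c6 * c7] 0 := by
  funext x
  rw [lieBracket_F0_F1, lieBracket_const_right, fderiv_F0_apply]
  funext i
  fin_cases i <;> simp [quadField] <;> ring

lemma lieBracket_F0_F0001 :
    lieBracket (F0 c1 c2 c3 c4 c5 c6)
        (lieBracket (F0 c1 c2 c3 c4 c5 c6) (lieBracket (F0 c1 c2 c3 c4 c5 c6) (F1 c7)))
      = quadField
          ![-(c1 * c7 * (c1 ^ 2 + c2 * c5) + c2 * c7 * c5 * c1), -(c3 * c7 * c5 * c1),
            2 * c4 * c5 * c6 * c7 - c5 * c7 * (c1 ^ 2 + c2 * c5)]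
          ![0, 0, 2 * c5 ^ 2 * c6 * c7]
          ![-(2 * c2 * c5 * c6 * c7), -(2 * c3 * c5 * c6 * c7), -(2 * c1 * c5 * c6 * c7)]
          ![0, 0, -(2 * c5 * c6 ^ 2 * c7)] := by
  funext x
  rw [lieBracket_F0_F001, lieBracket, fderiv_quadField_apply, fderiv_F0_apply]
  funext i
  fin_cases i <;> simp [F0, quadField] <;> ring

end Brackets

theorem stmt0_general (c1 c2 c3 c4 c5 c6 c7 : ℝ) (x : Fin 3 → ℝ) :
    lieBracket (F0 c1 c2 c3 c4 c5 c6) (F1 c7) x = ![-(c7 * c1), 0, -(c7 * c5)] ∧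
    lieBracket (F0 c1 c2 c3 c4 c5 c6) (lieBracket (F0 c1 c2 c3 c4 c5 c6) (F1 c7)) x
      = ![c7 * (c1 ^ 2 + c2 * c5), c7 * (c3 * c5), c7 * (c5 * (c1 + 2 * c6 * x 2))] ∧
    lieBracket (F1 c7) (lieBracket (F0 c1 c2 c3 c4 c5 c6) (F1 c7)) x = 0 ∧
    lieBracket (F1 c7)
      (lieBracket (F0 c1 c2 c3 c4 c5 c6) (lieBracket (F0 c1 c2 c3 c4 c5 c6) (F1 c7))) x = 0 ∧
    lieBracket (F1 c7)
      (lieBracket (F0 c1 c2 c3 c4 c5 c6)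
        (lieBracket (F0 c1 c2 c3 c4 c5 c6) (lieBracket (F0 c1 c2 c3 c4 c5 c6) (F1 c7)))) x
      = ![0, 0, 2 * c5 ^ 2 * c6 * c7 ^ 2] := by
  refine ⟨by rw [lieBracket_F0_F1], ?_, ?_, ?_, ?_⟩
  · rw [lieBracket_F0_F001]
    funext i
    fin_cases i <;> simp [quadField]
    ring
  · rw [lieBracket_F0_F1, F1_eq_const, lieBracket_const_left, fderiv_const_apply,
      zero_apply]
  · rw [lieBracket_F0_F001, F1_eq_const, lieBracket_const_left, fderiv_quadField_apply]
    simp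
  · rw [lieBracket_F0_F0001, F1_eq_const, lieBracket_const_left, fderiv_quadField_apply]
    funext i
    fin_cases i <;> simp
    ring

theorem stmt0 (c1 c2 c3 c4 c5 c6 c7 : ℝ)
    (h1 : c1 < 0) (h2 : c2 < 0) (h3 : 0 < c3) (h4 : c4 < 0)
    (h5 : 0 < c5) (h6 : c6 < 0) (h7 : 0 < c7) (x : Fin 3 → ℝ) :
    lieBracket (F0 c1 c2 c3 c4 c5 c6) (F1 c7) x = ![-(c7 * c1), 0, -(c7 * c5)] ∧
    lieBracket (F0 c1 c2 c3 c4 c5 c6) (lieBracket (F0 c1 c2 c3 c4 c5 c6) (F1 c7)) x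
      = ![c7 * (c1 ^ 2 + c2 * c5), c7 * (c3 * c5), c7 * (c5 * (c1 + 2 * c6 * x 2))] ∧
    lieBracket (F1 c7) (lieBracket (F0 c1 c2 c3 c4 c5 c6) (F1 c7)) x = 0 ∧
    lieBracket (F1 c7)
      (lieBracket (F0 c1 c2 c3 c4 c5 c6) (lieBracket (F0 c1 c2 c3 c4 c5 c6) (F1 c7))) x = 0 ∧
    lieBracket (F1 c7)
      (lieBracket (F0 c1 c2 c3 c4 c5 c6)
        (lieBracket (F0 c1 c2 c3 c4 c5 c6) (lieBracket (F0 c1 c2 c3 c4 c5 c6) (F1 c7)))) x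
      = ![0, 0, 2 * c5 ^ 2 * c6 * c7 ^ 2] :=
  stmt0_general c1 c2 c3 c4 c5 c6 c7 x
end
end

section
/- No extremal is singular on any subinterval: if (x(·),p(·),u(·)) is an extremal on [0,t_f] and I ⊆ [0,t_f] is an interval not reduced to a singleton, then the switching function Φ does not vanish identically on I. (Indeed, Φ ≡ 0 on I would force Φ = Φ̇ = Φ̈ = 0 there, hence ⟨p,F₁(x)⟩ = ⟨p,F₀₁(x)⟩ = ⟨p,F₀₀₁(x)⟩ = 0, forcing p = 0 by linear independence of F₁, F₀₁, F₀₀₁, contradicting p(t) ≠ 0.) Consequently every extremal is bang-bang. -/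
open MeasureTheory

noncomputable section

lemma ftc_zero {f : ℝ → ℝ} {tf t0 : ℝ} (ht0 : t0 ∈ Set.Ioo (0:ℝ) tf)
    (hf : ContinuousOn f (Set.Icc (0:ℝ) tf))
    (hconst : ∀ᶠ t in nhds t0, (∫ s in (0:ℝ)..t, f s) = ∫ s in (0:ℝ)..t0, f s) :
    f t0 = 0 := by
  have ht0' : t0 ∈ Set.Icc (0:ℝ) tf := Set.Ioo_subset_Icc_self ht0
  have hint : IntervalIntegrable f volume 0 t0 := by
    apply (hf.mono ?_).intervalIntegrable
    rw [Set.uIcc_of_le ht0'.1]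
    exact Set.Icc_subset_Icc le_rfl ht0'.2
  have hmeas : StronglyMeasurableAtFilter f (nhds t0) :=
    (hf.mono Set.Ioo_subset_Icc_self).stronglyMeasurableAtFilter isOpen_Ioo t0 ht0
  have hcont : ContinuousAt f t0 :=
    hf.continuousAt (Icc_mem_nhds ht0.1 ht0.2)
  have hD : HasDerivAt (fun t => ∫ s in (0:ℝ)..t, f s) (f t0) t0 :=
    intervalIntegral.integral_hasDerivAt_right hint hmeas hcont
  have hD' : HasDerivAt (fun _ : ℝ => ∫ s in (0:ℝ)..t0, f s) (f t0) t0 :=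
    hD.congr_of_eventuallyEq (Filter.EventuallyEq.symm hconst)
  exact hD'.unique (hasDerivAt_const _ _)


/-- An extremal of the minimum time problem on `[0, t_f]`: a measurable control
`u` with values in `[-1,1]`, together with an absolutely continuous pair
`(x, p)` (encoded by the integral form of the Hamiltonian ODE) with nonvanishing
adjoint vector, satisfying the maximization condition
`u(t) Φ(t) = |Φ(t)|` a.e., where `Φ(t) = c₇ p₁(t)` is the switching function. -/
structure IsExtremal (c1 c2 c3 c4 c5 c6 c7 tf : ℝ)
    (x p : ℝ → Fin 3 → ℝ) (u : ℝ → ℝ) : Prop where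
  measurable_u : Measurable u
  u_mem : ∀ᵐ t ∂(volume.restrict (Set.Icc (0:ℝ) tf)), u t ∈ Set.Icc (-1:ℝ) 1
  p_ne : ∀ t ∈ Set.Icc (0:ℝ) tf, p t ≠ 0
  cont_x : ContinuousOn x (Set.Icc (0:ℝ) tf)
  cont_p : ContinuousOn p (Set.Icc (0:ℝ) tf)
  ode_x1 : ∀ t ∈ Set.Icc (0:ℝ) tf,
    x t 0 = x 0 0 + ∫ s in (0:ℝ)..t, (c1 * x s 0 + c2 * x s 2 + u s * c7)
  ode_x2 : ∀ t ∈ Set.Icc (0:ℝ) tf,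
    x t 1 = x 0 1 + ∫ s in (0:ℝ)..t, (c3 * x s 2)
  ode_x3 : ∀ t ∈ Set.Icc (0:ℝ) tf,
    x t 2 = x 0 2 + ∫ s in (0:ℝ)..t, (c4 + c5 * x s 0 + c6 * (x s 2) ^ 2)
  ode_p1 : ∀ t ∈ Set.Icc (0:ℝ) tf,
    p t 0 = p 0 0 + ∫ s in (0:ℝ)..t, (-(c1 * p s 0 + c5 * p s 2))
  ode_p2 : ∀ t ∈ Set.Icc (0:ℝ) tf, p t 1 = p 0 1
  ode_p3 : ∀ t ∈ Set.Icc (0:ℝ) tf,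
    p t 2 = p 0 2 + ∫ s in (0:ℝ)..t, (-(c2 * p s 0 + c3 * p s 1 + 2 * c6 * x s 2 * p s 2))
  maximization : ∀ᵐ t ∂(volume.restrict (Set.Icc (0:ℝ) tf)),
    u t * (c7 * p t 0) = |c7 * p t 0|

/-- No extremal is singular on any nondegenerate subinterval of `[0, t_f]`:
the switching function `Φ(t) = c₇ p₁(t)` cannot vanish identically there.
Consequently every extremal is bang-bang. -/
theorem stmt5 (c1 c2 c3 c4 c5 c6 c7 tf : ℝ)
    (h1 : c1 < 0) (h2 : c2 < 0) (h3 : 0 < c3) (h4 : c4 < 0)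
    (h5 : 0 < c5) (h6 : c6 < 0) (h7 : 0 < c7)
    (x p : ℝ → Fin 3 → ℝ) (u : ℝ → ℝ)
    (hext : IsExtremal c1 c2 c3 c4 c5 c6 c7 tf x p u)
    (I : Set ℝ) (hI : I.OrdConnected) (hIsub : I ⊆ Set.Icc (0:ℝ) tf)
    (a b : ℝ) (ha : a ∈ I) (hb : b ∈ I) (hab : a < b) :
    ¬ (∀ t ∈ I, c7 * p t 0 = 0) := by
  intro h
  have ha' := hIsub ha
  have hb' := hIsub hb
  have hIccI : Set.Icc a b ⊆ I := hI.out ha hb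
  have hIoo : Set.Ioo a b ⊆ Set.Ioo (0:ℝ) tf := fun t ht =>
    ⟨lt_of_le_of_lt ha'.1 ht.1, lt_of_lt_of_le ht.2 hb'.2⟩
  have hIccsub : Set.Icc a b ⊆ Set.Icc (0:ℝ) tf := fun t ht =>
    ⟨le_trans ha'.1 ht.1, le_trans ht.2 hb'.2⟩
  have h0 : ∀ t ∈ Set.Icc a b, p t 0 = 0 := by
    intro t ht
    have := h t (hIccI ht)
    exact (mul_eq_zero.mp this).resolve_left h7.ne'
  have hp0 : ContinuousOn (fun s => p s 0) (Set.Icc (0:ℝ) tf) :=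
    (continuous_apply 0).comp_continuousOn hext.cont_p
  have hp1 : ContinuousOn (fun s => p s 1) (Set.Icc (0:ℝ) tf) :=
    (continuous_apply 1).comp_continuousOn hext.cont_p
  have hp2 : ContinuousOn (fun s => p s 2) (Set.Icc (0:ℝ) tf) :=
    (continuous_apply 2).comp_continuousOn hext.cont_p
  have hx2 : ContinuousOn (fun s => x s 2) (Set.Icc (0:ℝ) tf) :=
    (continuous_apply 2).comp_continuousOn hext.cont_x
  -- Step 1: p t 2 = 0 on the open interval
  have hstep1 : ∀ t ∈ Set.Ioo a b, p t 2 = 0 := by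
    intro t ht
    have hf1 : ContinuousOn (fun s => -(c1 * p s 0 + c5 * p s 2)) (Set.Icc (0:ℝ) tf) :=
      ((continuousOn_const.mul hp0).add (continuousOn_const.mul hp2)).neg
    have hval : ∀ s ∈ Set.Ioo a b,
        (∫ r in (0:ℝ)..s, -(c1 * p r 0 + c5 * p r 2)) = -(p 0 0) := by
      intro s hs
      have hsIcc : s ∈ Set.Icc (0:ℝ) tf := hIccsub (Set.Ioo_subset_Icc_self hs)
      have := hext.ode_p1 s hsIcc
      have hz := h0 s (Set.Ioo_subset_Icc_self hs)
      linarith [this, hz]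
    have hconst : ∀ᶠ s in nhds t, (∫ r in (0:ℝ)..s, -(c1 * p r 0 + c5 * p r 2))
        = ∫ r in (0:ℝ)..t, -(c1 * p r 0 + c5 * p r 2) := by
      filter_upwards [Ioo_mem_nhds ht.1 ht.2] with s hs
      rw [hval s hs, hval t ht]
    have hz := ftc_zero (hIoo ht) hf1 hconst
    have hz0 := h0 t (Set.Ioo_subset_Icc_self ht)
    have : c5 * p t 2 = 0 := by rw [hz0] at hz; nlinarith [hz]
    exact (mul_eq_zero.mp this).resolve_left h5.ne'
  -- Step 2: p t 1 = 0 at the midpoint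
  set t0 : ℝ := (a + b) / 2 with ht0def
  have ht0 : t0 ∈ Set.Ioo a b := ⟨by linarith, by linarith⟩
  have hf3 : ContinuousOn
      (fun s => -(c2 * p s 0 + c3 * p s 1 + 2 * c6 * x s 2 * p s 2)) (Set.Icc (0:ℝ) tf) :=
    (((continuousOn_const.mul hp0).add (continuousOn_const.mul hp1)).add
      (((continuousOn_const.mul hx2).mul hp2))).neg
  have hval3 : ∀ s ∈ Set.Ioo a b,
      (∫ r in (0:ℝ)..s, -(c2 * p r 0 + c3 * p r 1 + 2 * c6 * x r 2 * p r 2)) = -(p 0 2) := by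
    intro s hs
    have hsIcc : s ∈ Set.Icc (0:ℝ) tf := hIccsub (Set.Ioo_subset_Icc_self hs)
    have := hext.ode_p3 s hsIcc
    have hz := hstep1 s hs
    linarith [this, hz]
  have hconst3 : ∀ᶠ s in nhds t0,
      (∫ r in (0:ℝ)..s, -(c2 * p r 0 + c3 * p r 1 + 2 * c6 * x r 2 * p r 2))
      = ∫ r in (0:ℝ)..t0, -(c2 * p r 0 + c3 * p r 1 + 2 * c6 * x r 2 * p r 2) := by
    filter_upwards [Ioo_mem_nhds ht0.1 ht0.2] with s hs
    rw [hval3 s hs, hval3 t0 ht0]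
  have hz3 := ftc_zero (hIoo ht0) hf3 hconst3
  have hz0 := h0 t0 (Set.Ioo_subset_Icc_self ht0)
  have hz2 := hstep1 t0 ht0
  have hp1z : p t0 1 = 0 := by
    have hc : c3 * p t0 1 = 0 := by
      rw [hz0, hz2] at hz3; nlinarith [hz3]
    exact (mul_eq_zero.mp hc).resolve_left h3.ne'
  have hpz : p t0 = 0 := by
    funext i
    fin_cases i
    · exact hz0
    · exact hp1z
    · exact hz2
  exact hext.p_ne t0 (hIccsub (Set.Ioo_subset_Icc_self ht0)) hpz
end
end

section
/- Along any extremal (x(·),p(·),u(·)) on [0,t_f], the switching function has finitely many zeros: the set {t ∈ [0,t_f] : Φ(t) = 0} is finite. -/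
open MeasureTheory Topology Filter

noncomputable section

/-!
If the zeros of `Φ = c₇ p₁` accumulated at some `t₀`, then `Φ(t₀) = Φ'(t₀) = 0`; by Rolle's
theorem the zeros of `Φ'` accumulate at `t₀` as well, so also `Φ''(t₀) = 0`. From the adjoint
equations, `Φ' = -c₇ (c₁ p₁ + c₅ p₃)` and, `p₂` being constant, `Φ''(t₀) = c₇ c₃ c₅ p₂` once
`p₁(t₀) = p₃(t₀) = 0`. Hence `p(t₀) = 0`, contradicting the nontriviality of the adjoint vector.
-/

open Set

section ZerosOfDerivatives

variable {𝕜 : Type*} [NontriviallyNormedField 𝕜] {F : Type*} [NormedAddCommGroup F]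
  [NormedSpace 𝕜 F]

theorem HasDerivWithinAt.eq_zero_and_eq_zero_of_accPt {f : 𝕜 → F} {f' : F} {s : Set 𝕜} {x : 𝕜}
    (hf : HasDerivWithinAt f f' s x) (hacc : AccPt x (𝓟 {t ∈ s | f t = 0})) :
    f x = 0 ∧ f' = 0 := by
  have := accPt_principal_iff_nhdsWithin.mp hacc
  have hle : 𝓝[{t ∈ s | f t = 0} \ {x}] x ≤ 𝓝[s \ {x}] x :=
    nhdsWithin_mono _ (sdiff_subset_sdiff_left (sep_subset _ _))
  have hzero : ∀ᶠ y in 𝓝[{t ∈ s | f t = 0} \ {x}] x, f y = 0 :=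
    eventually_nhdsWithin_of_forall fun y hy => hy.1.2
  have hfx : f x = 0 :=
    tendsto_nhds_unique
      ((hf.continuousWithinAt.mono sdiff_subset).tendsto.mono_left hle)
      (tendsto_const_nhds.congr' (hzero.mono fun y hy => hy.symm))
  refine ⟨hfx, tendsto_nhds_unique ((hasDerivWithinAt_iff_tendsto_slope.mp hf).mono_left hle) ?_⟩
  refine tendsto_const_nhds.congr' (hzero.mono fun y hy => ?_)
  simp [slope, hy, hfx]

end ZerosOfDerivatives

section Rolle

variable {f f' : ℝ → ℝ} {s : Set ℝ}

theorem exists_mem_uIoo_hasDerivWithinAt_eq_zero (hs : s.OrdConnected)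
    (hf : ∀ t ∈ s, HasDerivWithinAt f (f' t) s t) {a b : ℝ} (ha : a ∈ s) (hb : b ∈ s)
    (hab : a ≠ b) (hfab : f a = f b) : ∃ c ∈ uIoo a b, f' c = 0 := by
  wlog hlt : a < b generalizing a b
  · rw [uIoo_comm]
    exact this hb ha hab.symm hfab.symm (lt_of_le_of_ne (not_lt.mp hlt) hab.symm)
  have hsub : Icc a b ⊆ s := hs.out ha hb
  rw [uIoo_of_le hlt.le]
  refine exists_hasDerivAt_eq_zero hlt
    (fun t ht => (hf t (hsub ht)).continuousWithinAt.mono hsub) hfab fun c hc => ?_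
  exact (hf c (hsub (Ioo_subset_Icc_self hc))).hasDerivAt
    (mem_of_superset (Ioo_mem_nhds hc.1 hc.2) (Ioo_subset_Icc_self.trans hsub))

theorem accPt_setOf_deriv_eq_zero (hs : s.OrdConnected)
    (hf : ∀ t ∈ s, HasDerivWithinAt f (f' t) s t) {x : ℝ} (hx : x ∈ s)
    (hacc : AccPt x (𝓟 {t ∈ s | f t = 0})) : AccPt x (𝓟 {t ∈ s | f' t = 0}) := by
  have hfx : f x = 0 := ((hf x hx).eq_zero_and_eq_zero_of_accPt hacc).1
  rw [accPt_iff_nhds] at hacc ⊢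
  intro U hU
  obtain ⟨ε, hε, hball⟩ := Metric.mem_nhds_iff.mp hU
  obtain ⟨z, ⟨hzU, hzs, hfz⟩, hzx⟩ := hacc _ (Metric.ball_mem_nhds x hε)
  obtain ⟨c, hc, hf'c⟩ :=
    exists_mem_uIoo_hasDerivWithinAt_eq_zero hs hf hzs hx hzx (hfz.trans hfx.symm)
  have hc_mem : c ∈ uIcc z x := uIoo_subset_uIcc_self hc
  refine ⟨c, ⟨hball ?_, hs.uIcc_subset hzs hx hc_mem, hf'c⟩, ?_⟩
  · exact (convex_ball x ε).ordConnected.uIcc_subset hzU (Metric.mem_ball_self hε) hc_mem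
  · rintro rfl
    rcases le_total z c with h | h <;> simp [uIoo, h] at hc

end Rolle

theorem hasDerivWithinAt_Icc_of_eq_add_integral {f g : ℝ → ℝ} {a b C : ℝ}
    (hf : ContinuousOn f (Icc a b)) (hg : ∀ t ∈ Icc a b, g t = C + ∫ s in a..t, f s)
    {t : ℝ} (ht : t ∈ Icc a b) : HasDerivWithinAt g (f t) (Icc a b) t := by
  have : Fact (t ∈ Icc a b) := ⟨ht⟩
  have hint : IntervalIntegrable f volume a t :=
    (hf.mono (uIcc_subset_Icc (left_mem_Icc.mpr (ht.1.trans ht.2)) ht)).intervalIntegrable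
  have hderiv := intervalIntegral.integral_hasDerivWithinAt_right (s := Icc a b) hint
    (hf.stronglyMeasurableAtFilter_nhdsWithin measurableSet_Icc t) (hf t ht)
  exact (hderiv.const_add C).congr hg (hg t ht)

namespace IsExtremal

variable {c1 c2 c3 c4 c5 c6 c7 tf : ℝ} {x p : ℝ → Fin 3 → ℝ} {u : ℝ → ℝ}

theorem hasDerivWithinAt_p_zero (hext : IsExtremal c1 c2 c3 c4 c5 c6 c7 tf x p u) :
    ∀ t ∈ Icc 0 tf, HasDerivWithinAt (fun s => p s 0) (-(c1 * p t 0 + c5 * p t 2))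
      (Icc 0 tf) t := by
  have hp := continuousOn_pi.mp hext.cont_p
  exact fun t => hasDerivWithinAt_Icc_of_eq_add_integral
    ((continuousOn_const.mul (hp 0)).add (continuousOn_const.mul (hp 2))).neg hext.ode_p1

theorem hasDerivWithinAt_p_two (hext : IsExtremal c1 c2 c3 c4 c5 c6 c7 tf x p u) :
    ∀ t ∈ Icc 0 tf, HasDerivWithinAt (fun s => p s 2)
      (-(c2 * p t 0 + c3 * p t 1 + 2 * c6 * x t 2 * p t 2)) (Icc 0 tf) t := by
  have hp := continuousOn_pi.mp hext.cont_p
  have hx := continuousOn_pi.mp hext.cont_x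
  exact fun t => hasDerivWithinAt_Icc_of_eq_add_integral
    (((continuousOn_const.mul (hp 0)).add (continuousOn_const.mul (hp 1))).add
      ((continuousOn_const.mul (hx 2)).mul (hp 2))).neg hext.ode_p3

end IsExtremal

theorem stmt6_general (c1 c2 c3 c4 c5 c6 c7 tf : ℝ)
    (h3 : 0 < c3) (h5 : 0 < c5) (h7 : 0 < c7)
    (x p : ℝ → Fin 3 → ℝ) (u : ℝ → ℝ)
    (hext : IsExtremal c1 c2 c3 c4 c5 c6 c7 tf x p u) :
    {t ∈ Set.Icc (0:ℝ) tf | c7 * p t 0 = 0}.Finite := by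
  by_contra hinf
  obtain ⟨t₀, ht₀, hacc⟩ :=
    Infinite.exists_accPt_of_subset_isCompact hinf isCompact_Icc (sep_subset _ _)
  have hΦ := hext.hasDerivWithinAt_p_zero
  have hacc_Φ : AccPt t₀ (𝓟 {t ∈ Icc 0 tf | p t 0 = 0}) := by simpa [h7.ne'] using hacc
  obtain ⟨hp0, hΦ'⟩ := (hΦ t₀ ht₀).eq_zero_and_eq_zero_of_accPt hacc_Φ
  have hacc_Φ' := accPt_setOf_deriv_eq_zero ordConnected_Icc hΦ ht₀ hacc_Φ
  obtain ⟨-, hΦ''⟩ := (((hΦ t₀ ht₀).const_mul c1).add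
    ((hext.hasDerivWithinAt_p_two t₀ ht₀).const_mul c5)).neg.eq_zero_and_eq_zero_of_accPt
    hacc_Φ'
  have hp2 : p t₀ 2 = 0 := by simpa [hp0, h5.ne'] using hΦ'
  have hp1 : p t₀ 1 = 0 := by simpa [hp0, hp2, h3.ne', h5.ne'] using hΦ''
  exact hext.p_ne t₀ ht₀ (funext fun i => by fin_cases i <;> assumption)

/-- Along any extremal the switching function `Φ(t) = c₇ p₁(t)` has finitely
many zeros in `[0, t_f]`. -/
theorem stmt6 (c1 c2 c3 c4 c5 c6 c7 tf : ℝ)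
    (h1 : c1 < 0) (h2 : c2 < 0) (h3 : 0 < c3) (h4 : c4 < 0)
    (h5 : 0 < c5) (h6 : c6 < 0) (h7 : 0 < c7)
    (x p : ℝ → Fin 3 → ℝ) (u : ℝ → ℝ)
    (hext : IsExtremal c1 c2 c3 c4 c5 c6 c7 tf x p u) :
    {t ∈ Set.Icc (0:ℝ) tf | c7 * p t 0 = 0}.Finite :=
  stmt6_general c1 c2 c3 c4 c5 c6 c7 tf h3 h5 h7 x p u hext
end
end

section
/- Order-1 boundary arc (current constraint): let s₁ ∈ {−1,1} and suppose x : I → ℝ³ is absolutely continuous on a nondegenerate interval I, solves ẋ = F₀(x) + uF₁(x) a.e. for a measurable control u, and satisfies x₁(t) = s₁ for all t ∈ I. Then the constraint g₁(x) = s₁x₁ − 1 is of order 1 (the derivative of g₁ along F₁ equals s₁c₇ ≠ 0) and the feedback boundary control is u(t) = −(c₁s₁ + c₂x₃(t))/c₇ for a.e. t ∈ I. If moreover p : I → ℝ³ and η : I → ℝ satisfy a.e. the constrained adjoint equation ṗ = −p·(F₀'(x) + uF₁'(x)) − η·∇g₁(x) with p₁ ≡ 0 on I, then the multiplier is η(t)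 = −s₁c₅p₃(t) on I. -/
open MeasureTheory

noncomputable section

/-! The frontier of an interval is Lebesgue-null, so almost every point of the arc is interior;
there a coordinate that is constant along the arc has derivative `0`. Comparing with the
dynamics of `x₁` gives the boundary control, and with the adjoint equation for `p₁` the
multiplier. -/

theorem Set.OrdConnected.ae_mem_interior {I : Set ℝ} (hI : I.OrdConnected) :
    ∀ᵐ t, t ∈ I → t ∈ interior I :=
  (interior_ae_eq_of_null_frontier (hI.convex.addHaar_frontier volume)).symm.le

theorem ae_deriv_eq_zero_of_eqOn_const {E : Type*} [NormedAddCommGroup E] [NormedSpace ℝ E]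
    {I : Set ℝ} (hI : I.OrdConnected) {f f' : ℝ → E} {c : E} (hf : ∀ t ∈ I, f t = c)
    (hderiv : ∀ᵐ t, t ∈ I → HasDerivAt f (f' t) t) :
    ∀ᵐ t, t ∈ I → f' t = 0 := by
  filter_upwards [hderiv, hI.ae_mem_interior] with t hft hint htI
  refine (hft htI).unique ((hasDerivAt_const t c).congr_of_eventuallyEq ?_)
  filter_upwards [isOpen_interior.mem_nhds (hint htI)] with s hs
  exact hf s (interior_subset hs)

theorem fderiv_mul_apply_sub_const {ι : Type*} [Fintype ι] (i : ι) (a c : ℝ) (y v : ι → ℝ) :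
    fderiv ℝ (fun w : ι → ℝ => a * w i - c) y v = a * v i := by
  have hg : HasFDerivAt (fun w : ι → ℝ => a * w i - c)
      (a • (ContinuousLinearMap.proj i : (ι → ℝ) →L[ℝ] ℝ)) y :=
    ((ContinuousLinearMap.proj i : (ι → ℝ) →L[ℝ] ℝ).hasFDerivAt.const_mul a).sub_const c
  simp [hg.fderiv]

theorem stmt12_general (c1 c2 c3 c4 c5 c6 c7 : ℝ)
    (h7 : 0 < c7)
    (s1 : ℝ) (hs1 : s1 = 1 ∨ s1 = -1)
    (I : Set ℝ) (hI : I.OrdConnected)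
    (x : ℝ → Fin 3 → ℝ) (u : ℝ → ℝ)
    (hode : ∀ᵐ t ∂volume, t ∈ I →
      HasDerivAt (fun s => x s 0) (c1 * x t 0 + c2 * x t 2 + u t * c7) t ∧
      HasDerivAt (fun s => x s 1) (c3 * x t 2) t ∧
      HasDerivAt (fun s => x s 2) (c4 + c5 * x t 0 + c6 * (x t 2) ^ 2) t)
    (hbdry : ∀ t ∈ I, x t 0 = s1) :
    (∀ y : Fin 3 → ℝ,
      fderiv ℝ (fun w : Fin 3 → ℝ => s1 * w 0 - 1) y (F1 c7 y) = s1 * c7 ∧ s1 * c7 ≠ 0) ∧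
    (∀ᵐ t ∂volume, t ∈ I → u t = -(c1 * s1 + c2 * x t 2) / c7) ∧
    (∀ (p : ℝ → Fin 3 → ℝ) (η : ℝ → ℝ),
      (∀ᵐ t ∂volume, t ∈ I →
        HasDerivAt (fun s => p s 0) (-(c1 * p t 0 + c5 * p t 2) - η t * s1) t ∧
        HasDerivAt (fun s => p s 1) 0 t ∧
        HasDerivAt (fun s => p s 2) (-(c2 * p t 0 + c3 * p t 1 + 2 * c6 * x t 2 * p t 2)) t) →
      (∀ t ∈ I, p t 0 = 0) →
      ∀ᵐ t ∂volume, t ∈ I → η t = -s1 * c5 * p t 2) := by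
  have hs1sq : s1 * s1 = 1 := by rcases hs1 with rfl | rfl <;> norm_num
  refine ⟨fun y => ⟨?_, mul_ne_zero (left_ne_zero_of_mul_eq_one hs1sq) h7.ne'⟩, ?_, ?_⟩
  · simp [fderiv_mul_apply_sub_const, F1]
  · have hx0' := ae_deriv_eq_zero_of_eqOn_const hI hbdry (hode.mono fun t h ht => (h ht).1)
    filter_upwards [hx0'] with t hx0' htI
    rw [hbdry t htI] at hx0'
    field_simp
    linarith [hx0' htI]
  · intro p η hadj hp0
    have hp0' := ae_deriv_eq_zero_of_eqOn_const hI hp0 (hadj.mono fun t h ht => (h ht).1)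
    filter_upwards [hp0'] with t hp0' htI
    linear_combination (-s1) * hp0' htI - s1 * c1 * hp0 t htI - η t * hs1sq

/-- Order-1 boundary arc (current constraint `g₁(x) = s₁x₁ − 1`): the constraint
is of order 1 (`F₁·g₁ = s₁c₇ ≠ 0`), the feedback boundary control is
`u = −(c₁s₁ + c₂x₃)/c₇` a.e., and if `(p, η)` satisfies the constrained adjoint
equation with `p₁ ≡ 0` then `η = −s₁c₅p₃` a.e. on the arc. -/
theorem stmt12 (c1 c2 c3 c4 c5 c6 c7 : ℝ)
    (h1 : c1 < 0) (h2 : c2 < 0) (h3 : 0 < c3) (h4 : c4 < 0)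
    (h5 : 0 < c5) (h6 : c6 < 0) (h7 : 0 < c7)
    (s1 : ℝ) (hs1 : s1 = 1 ∨ s1 = -1)
    (I : Set ℝ) (hI : I.OrdConnected) (a b : ℝ) (ha : a ∈ I) (hb : b ∈ I) (hab : a < b)
    (x : ℝ → Fin 3 → ℝ) (u : ℝ → ℝ) (hu : Measurable u)
    (hcx : ContinuousOn x I)
    (hode : ∀ᵐ t ∂volume, t ∈ I →
      HasDerivAt (fun s => x s 0) (c1 * x t 0 + c2 * x t 2 + u t * c7) t ∧
      HasDerivAt (fun s => x s 1) (c3 * x t 2) t ∧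
      HasDerivAt (fun s => x s 2) (c4 + c5 * x t 0 + c6 * (x t 2) ^ 2) t)
    (hbdry : ∀ t ∈ I, x t 0 = s1) :
    (∀ y : Fin 3 → ℝ,
      fderiv ℝ (fun w : Fin 3 → ℝ => s1 * w 0 - 1) y (F1 c7 y) = s1 * c7 ∧ s1 * c7 ≠ 0) ∧
    (∀ᵐ t ∂volume, t ∈ I → u t = -(c1 * s1 + c2 * x t 2) / c7) ∧
    (∀ (p : ℝ → Fin 3 → ℝ) (η : ℝ → ℝ),
      (∀ᵐ t ∂volume, t ∈ I →
        HasDerivAt (fun s => p s 0) (-(c1 * p t 0 + c5 * p t 2) - η t * s1) t ∧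
        HasDerivAt (fun s => p s 1) 0 t ∧
        HasDerivAt (fun s => p s 2) (-(c2 * p t 0 + c3 * p t 1 + 2 * c6 * x t 2 * p t 2)) t) →
      (∀ t ∈ I, p t 0 = 0) →
      ∀ᵐ t ∂volume, t ∈ I → η t = -s1 * c5 * p t 2) :=
  stmt12_general c1 c2 c3 c4 c5 c6 c7 h7 s1 hs1 I hI x u hode hbdry
end
end

section
/- Order-2 boundary arc (velocity constraint): let s₃ ∈ {−1,1} and suppose x : I → ℝ³ is absolutely continuous on a nondegenerate interval I, solves ẋ = F₀(x) + uF₁(x) a.e. for a measurable control u, and satisfies x₃(t) = s₃ for all t ∈ I. Then on I the first component is constant, x₁ ≡ −(c₄ + c₆)/c₅ > 0, and the control is a.e. constant, u ≡ −(−c₁(c₄ + c₆)/c₅ + c₂s₃)/c₇. If moreover p : I → ℝ³ and η : I → ℝ satisfy a.e. the constrained adjoint equation ṗ = −p·(F₀'(x) + uF₁'(x)) − η·∇g₃(x) with p₁ ≡ 0 and p₃ ≡ 0 on I, then p₂ is constant on I and the multiplier is constant: η ≡ −s₃c₃p₂. -/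
open MeasureTheory Set Filter Metric
open scoped Topology

noncomputable section

lemma aux_mem_interior {I : Set ℝ} (hI : I.OrdConnected) {c d t : ℝ}
    (hc : c ∈ I) (hd : d ∈ I) (h1 : c < t) (h2 : t < d) : t ∈ interior I :=
  mem_interior.2 ⟨Ioo c d, (Ioo_subset_Icc_self).trans (hI.out hc hd), isOpen_Ioo, ⟨h1, h2⟩⟩

lemma aux_null {I : Set ℝ} (hI : I.OrdConnected) : volume (I \ interior I) = 0 := by
  have hsub : I \ interior I ⊆ {t | t ∈ I ∧ ∀ s ∈ I, t ≤ s} ∪ {t | t ∈ I ∧ ∀ s ∈ I, s ≤ t} := by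
    rintro t ⟨htI, hti⟩
    by_contra hcon
    simp only [Set.mem_union, Set.mem_setOf_eq, not_or, not_and, not_forall, not_le,
      exists_prop] at hcon
    obtain ⟨c, hc, hct⟩ := hcon.1 htI
    obtain ⟨d, hd, htd⟩ := hcon.2 htI
    exact hti (aux_mem_interior hI hc hd hct htd)
  refine measure_mono_null hsub (measure_union_null ?_ ?_)
  · refine Set.Subsingleton.measure_zero (fun u hu v hv => ?_) _
    exact le_antisymm (hu.2 v hv.1) (hv.2 u hu.1)
  · refine Set.Subsingleton.measure_zero (fun u hu v hv => ?_) _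
    exact le_antisymm (hv.2 u hu.1) (hu.2 v hv.1)

lemma aux_ae_zero {I : Set ℝ} (hI : I.OrdConnected) {a : ℝ} (ha : a ∈ I)
    {h : ℝ → ℝ} (hint : ∀ t ∈ I, IntervalIntegrable h volume a t)
    (hzero : ∀ t ∈ I, ∫ s in a..t, h s = 0)
    {c d : ℝ} (hc : c ∈ I) (hd : d ∈ I) (hcd : c < d) :
    ∀ᵐ s ∂(volume : Measure ℝ), s ∈ Ioo c d → h s = 0 := by
  -- h is integrable on Ioc c d
  have hicd : IntervalIntegrable h volume c d := (hint c hc).symm.trans (hint d hd)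
  have hIoc : IntegrableOn h (Ioc c d) volume := by
    have := (intervalIntegrable_iff.1 hicd)
    rwa [uIoc_of_le hcd.le] at this
  set g : ℝ → ℝ := (Ioc c d).indicator h with hg
  have hgint : Integrable g volume := hIoc.integrable_indicator measurableSet_Ioc
  have hdiff := (IsUnifLocDoublingMeasure.vitaliFamily (volume : Measure ℝ) 1).ae_tendsto_average
    hgint.locallyIntegrable
  filter_upwards [hdiff] with t ht htIoo
  -- along right intervals Icc t y
  have T : Tendsto (fun y => ⨍ z in Icc t y, g z) (𝓝[>] t) (𝓝 (g t)) :=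
    ht.comp (Real.tendsto_Icc_vitaliFamily_right t)
  have hev : ∀ᶠ y in 𝓝[>] t, (⨍ z in Icc t y, g z) = 0 := by
    filter_upwards [Ioo_mem_nhdsGT_of_mem ⟨le_refl t, htIoo.2⟩] with y hy
    have hty : t ≤ y := hy.1.le
    have hsub : Icc t y ⊆ Ioc c d := fun z hz => ⟨lt_of_lt_of_le htIoo.1 hz.1, hz.2.trans hy.2.le⟩
    have htI : t ∈ I := hI.out hc hd ⟨htIoo.1.le, htIoo.2.le⟩
    have hyI : y ∈ I := hI.out hc hd ⟨(htIoo.1.trans hy.1).le, hy.2.le⟩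
    have hintegral : ∫ z in Icc t y, g z = 0 := by
      rw [hg, setIntegral_indicator measurableSet_Ioc, Set.inter_eq_left.2 hsub,
        integral_Icc_eq_integral_Ioc, ← intervalIntegral.integral_of_le hty,
        ← intervalIntegral.integral_interval_sub_left (hint y hyI) (hint t htI),
        hzero y hyI, hzero t htI, sub_zero]
    rw [setAverage_eq, hintegral, smul_zero]
  have T0 : Tendsto (fun y => ⨍ z in Icc t y, g z) (𝓝[>] t) (𝓝 0) :=
    Tendsto.congr' (hev.mono fun y hy => hy.symm) tendsto_const_nhds
  have : g t = 0 := tendsto_nhds_unique T T0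
  rwa [hg, indicator_of_mem (Ioo_subset_Ioc_self htIoo) h] at this

lemma aux_ae_interior {I : Set ℝ} (hI : I.OrdConnected) {P : ℝ → Prop}
    (key : ∀ c d : ℝ, c ∈ I → d ∈ I → c < d →
      ∀ᵐ s ∂(volume : Measure ℝ), s ∈ Ioo c d → P s) :
    ∀ᵐ t ∂(volume : Measure ℝ), t ∈ interior I → P t := by
  set S : ℚ × ℚ → Set ℝ :=
    fun q => {s | (q.1 : ℝ) ∈ I ∧ (q.2 : ℝ) ∈ I ∧ s ∈ Ioo (q.1 : ℝ) (q.2 : ℝ) ∧ ¬ P s} with hS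
  have hSnull : ∀ q : ℚ × ℚ, volume (S q) = 0 := by
    intro q
    by_cases hq : (q.1 : ℝ) ∈ I ∧ (q.2 : ℝ) ∈ I ∧ (q.1 : ℝ) < (q.2 : ℝ)
    · have hk := key _ _ hq.1 hq.2.1 hq.2.2
      rw [ae_iff] at hk
      refine measure_mono_null (fun s hs => ?_) hk
      simp only [Set.mem_setOf_eq, _root_.not_imp, not_forall]
      exact ⟨hs.2.2.1, hs.2.2.2⟩
    · have : S q = ∅ := by
        ext s
        simp only [hS, Set.mem_setOf_eq, Set.mem_empty_iff_false, iff_false, not_and]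
        intro h1 h2 h3
        exact absurd ⟨h1, h2, h3.1.trans h3.2⟩ hq
      simp [this]
  rw [ae_iff]
  refine measure_mono_null (fun t ht => ?_) (measure_iUnion_null hSnull)
  simp only [Set.mem_setOf_eq, _root_.not_imp] at ht
  obtain ⟨hti, htP⟩ := ht
  obtain ⟨ε, hε, hball⟩ := Metric.mem_nhds_iff.1 (mem_interior_iff_mem_nhds.1 hti)
  obtain ⟨q1, hq1⟩ := exists_rat_btwn (show t - ε < t by linarith)
  obtain ⟨q2, hq2⟩ := exists_rat_btwn (show t < t + ε by linarith)
  have hq1I : (q1 : ℝ) ∈ I := hball (by rw [Real.ball_eq_Ioo]; exact ⟨hq1.1, hq1.2.trans (by linarith)⟩)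
  have hq2I : (q2 : ℝ) ∈ I := hball (by rw [Real.ball_eq_Ioo]; exact ⟨lt_trans (by linarith) hq2.1, hq2.2⟩)
  exact Set.mem_iUnion.2 ⟨(q1, q2), hq1I, hq2I, ⟨hq1.2, hq2.1⟩, htP⟩

lemma aux_eq_on_of_ae {I : Set ℝ} (hI : I.OrdConnected) {a b : ℝ}
    (ha : a ∈ I) (hb : b ∈ I) (hab : a < b) {f : ℝ → ℝ} (hf : ContinuousOn f I) {K : ℝ}
    (hae : ∀ᵐ t ∂(volume : Measure ℝ), t ∈ interior I → f t = K) :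
    ∀ t ∈ I, f t = K := by
  intro t ht
  set B := {t | ¬ (t ∈ interior I → f t = K)} with hB
  have hBnull : volume B = 0 := ae_iff.1 hae
  set A := interior I \ B with hA
  have hAI : A ⊆ I := fun s hs => interior_subset hs.1
  have hAK : ∀ s ∈ A, f s = K := by
    intro s hs
    by_contra hcon
    exact hs.2 (by simp only [hB, Set.mem_setOf_eq, _root_.not_imp]; exact ⟨hs.1, hcon⟩)
  -- t is in the closure of A
  have htcl : t ∈ closure A := by
    rw [_root_.mem_closure_iff]
    intro o ho hto
    obtain ⟨ε, hε, hball⟩ := Metric.mem_nhds_iff.1 (ho.mem_nhds hto)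
    obtain ⟨s, hsI, hst⟩ : ∃ s ∈ I, s ≠ t := by
      rcases lt_or_ge t b with h | h
      · exact ⟨b, hb, fun hh => absurd hh.symm (ne_of_lt h)⟩
      · exact ⟨a, ha, fun hh => absurd hh (ne_of_lt (lt_of_lt_of_le hab h))⟩
    have hJ : ∃ J : Set ℝ, J ⊆ interior I ∧ J ⊆ Metric.ball t ε ∧ 0 < volume J := by
      rcases hst.lt_or_gt with h | h
      · refine ⟨Ioo (max s (t - ε)) t, fun y hy => aux_mem_interior hI hsI ht
          (lt_of_le_of_lt (le_max_left _ _) hy.1) hy.2, fun y hy => ?_, ?_⟩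
        · rw [Real.ball_eq_Ioo]
          exact ⟨lt_of_le_of_lt (le_max_right _ _) hy.1, hy.2.trans (by linarith)⟩
        · rw [Real.volume_Ioo]
          exact ENNReal.ofReal_pos.2 (by have := max_lt h (by linarith : t - ε < t); linarith)
      · refine ⟨Ioo t (min s (t + ε)), fun y hy => aux_mem_interior hI ht hsI hy.1
          (lt_of_lt_of_le hy.2 (min_le_left _ _)), fun y hy => ?_, ?_⟩
        · rw [Real.ball_eq_Ioo]
          exact ⟨lt_of_lt_of_le (by linarith) hy.1.le, lt_of_lt_of_le hy.2 (min_le_right _ _)⟩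
        · rw [Real.volume_Ioo]
          exact ENNReal.ofReal_pos.2 (by have := lt_min h (by linarith : t < t + ε); linarith)
    obtain ⟨J, hJi, hJb, hJv⟩ := hJ
    have : volume (J \ B) ≠ 0 := by
      rw [measure_diff_null hBnull]; exact hJv.ne'
    obtain ⟨y, hy⟩ := nonempty_of_measure_ne_zero this
    exact ⟨y, hball (hJb hy.1), hJi hy.1, hy.2⟩
  -- conclude by continuity
  have hne : (𝓝[A] t).NeBot := mem_closure_iff_nhdsWithin_neBot.1 htcl
  have h1 : Tendsto f (𝓝[A] t) (𝓝 (f t)) := (hf t ht).mono hAI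
  have h2 : Tendsto f (𝓝[A] t) (𝓝 K) :=
    tendsto_const_nhds.congr' (eventually_nhdsWithin_of_forall fun s hs => (hAK s hs).symm)
  exact tendsto_nhds_unique h1 h2

/-- Order-2 boundary arc (velocity constraint `g₃(x) = s₃x₃ − 1`): along the
arc `x₁ ≡ −(c₄+c₆)/c₅ > 0` and the control is a.e. the constant
`−(−c₁(c₄+c₆)/c₅ + c₂s₃)/c₇`; if `(p, η)` satisfies the constrained adjoint
equation (in integral/absolutely continuous form) with `p₁ ≡ p₃ ≡ 0`, then `p₂`
is constant and `η ≡ −s₃c₃p₂`. -/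
theorem stmt13 (c1 c2 c3 c4 c5 c6 c7 : ℝ)
    (h1 : c1 < 0) (h2 : c2 < 0) (h3 : 0 < c3) (h4 : c4 < 0)
    (h5 : 0 < c5) (h6 : c6 < 0) (h7 : 0 < c7)
    (s3 : ℝ) (hs3 : s3 = 1 ∨ s3 = -1)
    (I : Set ℝ) (hI : I.OrdConnected) (a b : ℝ) (ha : a ∈ I) (hb : b ∈ I) (hab : a < b)
    (x : ℝ → Fin 3 → ℝ) (u : ℝ → ℝ) (hu : Measurable u)
    (hcx : ContinuousOn x I)
    (hode : ∀ᵐ t ∂volume, t ∈ I →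
      HasDerivAt (fun s => x s 0) (c1 * x t 0 + c2 * x t 2 + u t * c7) t ∧
      HasDerivAt (fun s => x s 1) (c3 * x t 2) t ∧
      HasDerivAt (fun s => x s 2) (c4 + c5 * x t 0 + c6 * (x t 2) ^ 2) t)
    (hbdry : ∀ t ∈ I, x t 2 = s3) :
    (∀ t ∈ I, x t 0 = -(c4 + c6) / c5) ∧
    0 < -(c4 + c6) / c5 ∧
    (∀ᵐ t ∂volume, t ∈ I → u t = -(-(c1 * (c4 + c6)) / c5 + c2 * s3) / c7) ∧
    (∀ (p : ℝ → Fin 3 → ℝ) (η : ℝ → ℝ),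
      ContinuousOn p I →
      (∀ t ∈ I, IntervalIntegrable η volume a t) →
      (∀ t ∈ I,
        p t 0 = p a 0 + ∫ s in a..t, (-(c1 * p s 0 + c5 * p s 2)) ∧
        p t 1 = p a 1 + ∫ s in a..t, (0:ℝ) ∧
        p t 2 = p a 2 +
          ∫ s in a..t, (-(c2 * p s 0 + c3 * p s 1 + 2 * c6 * x s 2 * p s 2) - η s * s3)) →
      (∀ t ∈ I, p t 0 = 0) → (∀ t ∈ I, p t 2 = 0) →
      (∀ t ∈ I, p t 1 = p a 1) ∧
      (∀ᵐ t ∂volume, t ∈ I → η t = -s3 * c3 * p a 1)) := by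
  have hc5 : c5 ≠ 0 := ne_of_gt h5
  have hc7 : c7 ≠ 0 := ne_of_gt h7
  have hs3sq : s3 ^ 2 = 1 := by rcases hs3 with h | h <;> rw [h] <;> norm_num
  have hNae : ∀ᵐ t ∂(volume : Measure ℝ), t ∈ I → t ∈ interior I := by
    rw [ae_iff]
    refine measure_mono_null (fun t ht => ?_) (aux_null hI)
    simp only [Set.mem_setOf_eq, _root_.not_imp] at ht
    exact ⟨ht.1, ht.2⟩
  -- x₁ is a.e. constant on the interior
  have hx0ae : ∀ᵐ t ∂(volume : Measure ℝ), t ∈ interior I → x t 0 = -(c4 + c6) / c5 := by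
    filter_upwards [hode] with t hode' hti
    have htI : t ∈ I := interior_subset hti
    have hloc : (fun s => x s 2) =ᶠ[𝓝 t] fun _ => s3 := by
      filter_upwards [mem_interior_iff_mem_nhds.1 hti] with s hs using hbdry s hs
    have hzero : HasDerivAt (fun s => x s 2) 0 t :=
      (hasDerivAt_const t s3).congr_of_eventuallyEq hloc
    have hder := ((hode' htI).2.2).unique hzero
    rw [hbdry t htI, hs3sq] at hder
    field_simp
    linarith
  have hx0 : ∀ t ∈ I, x t 0 = -(c4 + c6) / c5 := by
    refine aux_eq_on_of_ae hI ha hb hab ?_ hx0ae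
    exact fun t ht => (continuous_apply (0 : Fin 3)).continuousAt.comp_continuousWithinAt (hcx t ht)
  have hKpos : 0 < -(c4 + c6) / c5 := div_pos (by linarith) h5
  refine ⟨hx0, hKpos, ?_, ?_⟩
  · -- the control is a.e. constant
    filter_upwards [hode, hNae] with t hode' hmem htI
    have hti := hmem htI
    have hloc : (fun s => x s 0) =ᶠ[𝓝 t] fun _ => -(c4 + c6) / c5 := by
      filter_upwards [mem_interior_iff_mem_nhds.1 hti] with s hs using hx0 s hs
    have hzero : HasDerivAt (fun s => x s 0) 0 t :=
      (hasDerivAt_const t (-(c4 + c6) / c5)).congr_of_eventuallyEq hloc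
    have hder := ((hode' htI).1).unique hzero
    rw [hx0 t htI, hbdry t htI] at hder
    field_simp at hder ⊢
    linarith
  · -- the adjoint part
    intro p η hcp hηint hpeq hp0 hp2
    have hp1 : ∀ t ∈ I, p t 1 = p a 1 := by
      intro t ht
      have := (hpeq t ht).2.1
      simpa using this
    refine ⟨hp1, ?_⟩
    set hfun : ℝ → ℝ := fun s => η s * s3 + c3 * p a 1 with hhfun
    have hint : ∀ t ∈ I, IntervalIntegrable hfun volume a t := fun t ht =>
      ((hηint t ht).mul_const s3).add intervalIntegrable_const
    have hzero : ∀ t ∈ I, ∫ s in a..t, hfun s = 0 := by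
      intro t ht
      have h3 := (hpeq t ht).2.2
      rw [hp2 t ht, hp2 a ha] at h3
      have hcong : ∫ s in a..t,
          (-(c2 * p s 0 + c3 * p s 1 + 2 * c6 * x s 2 * p s 2) - η s * s3) =
          ∫ s in a..t, -(hfun s) := by
        refine intervalIntegral.integral_congr (fun s hs => ?_)
        have hsI : s ∈ I := hI.uIcc_subset ha ht hs
        rw [hp0 s hsI, hp2 s hsI, hp1 s hsI]
        simp only [hhfun]
        ring
      rw [hcong, intervalIntegral.integral_neg] at h3
      linarith
    have hae_int : ∀ᵐ t ∂(volume : Measure ℝ), t ∈ interior I → hfun t = 0 :=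
      aux_ae_interior hI (fun c d hc hd hcd => aux_ae_zero hI ha hint hzero hc hd hcd)
    filter_upwards [hae_int, hNae] with t h1' h2' htI
    have hzt := h1' (h2' htI)
    simp only [hhfun] at hzt
    rcases hs3 with h | h <;> rw [h] at hzt ⊢ <;> linarith
end
end

section
/- Simultaneous boundary arcs: if x : I → ℝ³ solves ẋ = F₀(x) + uF₁(x) a.e. on a nondegenerate interval I with x₁(t) = s₁ and x₃(t) = s₃ for all t ∈ I, where s₁, s₃ ∈ {−1,1}, then necessarily c₄ + c₅s₁ + c₆ = 0 and s₁ = 1; in particular such a doubly-boundary arc can exist only if c₄ + c₅ + c₆ = 0. -/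
open MeasureTheory

noncomputable section

/-- Simultaneous boundary arcs: if a solution arc of `ẋ = F₀(x) + uF₁(x)` keeps
`x₁ ≡ s₁` and `x₃ ≡ s₃`, then `c₄ + c₅s₁ + c₆ = 0` and `s₁ = 1`; in particular
this can occur only if `c₄ + c₅ + c₆ = 0`. -/
theorem stmt14 (c1 c2 c3 c4 c5 c6 c7 : ℝ)
    (h1 : c1 < 0) (h2 : c2 < 0) (h3 : 0 < c3) (h4 : c4 < 0)
    (h5 : 0 < c5) (h6 : c6 < 0) (h7 : 0 < c7)
    (s1 s3 : ℝ) (hs1 : s1 = 1 ∨ s1 = -1) (hs3 : s3 = 1 ∨ s3 = -1)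
    (I : Set ℝ) (hI : I.OrdConnected) (a b : ℝ) (ha : a ∈ I) (hb : b ∈ I) (hab : a < b)
    (x : ℝ → Fin 3 → ℝ) (u : ℝ → ℝ)
    (hcx : ContinuousOn x I)
    (hode : ∀ᵐ t ∂volume, t ∈ I →
      HasDerivAt (fun s => x s 0) (c1 * x t 0 + c2 * x t 2 + u t * c7) t ∧
      HasDerivAt (fun s => x s 1) (c3 * x t 2) t ∧
      HasDerivAt (fun s => x s 2) (c4 + c5 * x t 0 + c6 * (x t 2) ^ 2) t)
    (hbdry1 : ∀ t ∈ I, x t 0 = s1) (hbdry3 : ∀ t ∈ I, x t 2 = s3) :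
    c4 + c5 * s1 + c6 = 0 ∧ s1 = 1 ∧ c4 + c5 + c6 = 0 := by
  have hIcc : Set.Icc a b ⊆ I := hI.out ha hb
  -- find a point in Ioo a b where the ODE holds
  obtain ⟨t, hOde, htI⟩ : ∃ t, (t ∈ I →
      HasDerivAt (fun s => x s 0) (c1 * x t 0 + c2 * x t 2 + u t * c7) t ∧
      HasDerivAt (fun s => x s 1) (c3 * x t 2) t ∧
      HasDerivAt (fun s => x s 2) (c4 + c5 * x t 0 + c6 * (x t 2) ^ 2) t) ∧
      t ∈ Set.Ioo a b := by
    have hne : volume.restrict (Set.Ioo a b) ≠ 0 := by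
      rw [ne_eq, MeasureTheory.Measure.restrict_eq_zero, Real.volume_Ioo]
      simp only [ENNReal.ofReal_eq_zero, not_le]
      linarith
    haveI : (MeasureTheory.ae (volume.restrict (Set.Ioo a b))).NeBot := MeasureTheory.ae_neBot.mpr hne
    exact ((MeasureTheory.ae_restrict_of_ae hode).and
      (MeasureTheory.ae_restrict_mem measurableSet_Ioo)).exists
  have htI' : t ∈ I := hIcc (Set.Ioo_subset_Icc_self htI)
  obtain ⟨-, -, hd3⟩ := hOde htI'
  -- x s 2 is locally constant near t
  have hloc : (fun s => x s 2) =ᶠ[nhds t] fun _ => s3 := by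
    filter_upwards [Ioo_mem_nhds htI.1 htI.2] with y hy
    exact hbdry3 y (hIcc (Set.Ioo_subset_Icc_self hy))
  have hd3' : HasDerivAt (fun _ : ℝ => s3) (c4 + c5 * x t 0 + c6 * (x t 2) ^ 2) t :=
    hd3.congr_of_eventuallyEq hloc.symm
  have hzero : c4 + c5 * x t 0 + c6 * (x t 2) ^ 2 = 0 :=
    hd3'.unique (hasDerivAt_const t s3)
  rw [hbdry1 t htI', hbdry3 t htI'] at hzero
  have hs3sq : s3 ^ 2 = 1 := by rcases hs3 with h | h <;> rw [h] <;> ring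
  rw [hs3sq, mul_one] at hzero
  have hs1' : s1 = 1 := by
    rcases hs1 with h | h
    · exact h
    · exfalso; rw [h] at hzero; nlinarith
  refine ⟨hzero, hs1', ?_⟩
  rw [hs1'] at hzero; linarith
end
end

section
/- Invariance for the order-1 boundary Hamiltonian: define on ℝ³×ℝ³ the true Hamiltonian H_{c₁}(x,p) = H₀(x,p) + u_{c₁}(x)H₁(x,p) + η_{c₁}(x,p)g₁(x), where g₁(x) = x₁ − 1, u_{c₁}(x) = −(c₁ + c₂x₃)/c₇ and η_{c₁}(x,p) = −c₅p₃. Let z(·) = (x(·),p(·)) be a solution of the Hamiltonian system ż = X_{H_{c₁}}(z) on an interval J containing 0 with g₁(x(0)) = 0 and H₁(z(0)) = 0. Then g₁(x(t)) = 0 and H₁(z(t)) = 0 for all t ∈ J; moreover, along z(·) the trajectory solves ẋ = F₀(x) + u_{c₁}(x)F₁(x) and ṗ = −p·(F₀'(x) + u_{c₁}(x)F₁'(x)) − η_{c₁}(z)∇g₁(x), so z(·) together with the feedback control u_{c₁}∘x and multiplier η_{c₁}∘z is an extremal of the state-constrained problem lying on the boundary g₁ = 0. -/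
noncomputable section

/-- The Hamiltonian vector field `X_h = (∂h/∂p, −∂h/∂x)` of a function `h`
on `ℝ³ × ℝ³` (coordinates `(x, p)`). -/
def Xham (h : (Fin 3 → ℝ) × (Fin 3 → ℝ) → ℝ) (z : (Fin 3 → ℝ) × (Fin 3 → ℝ)) :
    (Fin 3 → ℝ) × (Fin 3 → ℝ) :=
  (fun i => fderiv ℝ h z ((0 : Fin 3 → ℝ), Pi.single i (1:ℝ)),
   fun i => -fderiv ℝ h z (Pi.single i (1:ℝ), (0 : Fin 3 → ℝ)))

/-- Hamiltonian lift `H₀(x,p) = ⟨p, F₀(x)⟩`. -/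
def H0 (c1 c2 c3 c4 c5 c6 : ℝ) (z : (Fin 3 → ℝ) × (Fin 3 → ℝ)) : ℝ :=
  ∑ i, z.2 i * F0 c1 c2 c3 c4 c5 c6 z.1 i

/-- Hamiltonian lift `H₁(x,p) = ⟨p, F₁(x)⟩ = c₇ p₁`. -/
def H1 (c7 : ℝ) (z : (Fin 3 → ℝ) × (Fin 3 → ℝ)) : ℝ := c7 * z.2 0

/-- Feedback boundary control of the order-1 constraint `g₁(x) = x₁ − 1`. -/
def uc1 (c1 c2 c7 : ℝ) (x : Fin 3 → ℝ) : ℝ := -(c1 + c2 * x 2) / c7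

/-- Multiplier of the order-1 constraint. -/
def etac1 (c5 : ℝ) (z : (Fin 3 → ℝ) × (Fin 3 → ℝ)) : ℝ := -(c5 * z.2 2)

/-- True Hamiltonian of the order-1 boundary arc:
`H_{c₁} = H₀ + u_{c₁}H₁ + η_{c₁} g₁`. -/
def Hc1 (c1 c2 c3 c4 c5 c6 c7 : ℝ) (z : (Fin 3 → ℝ) × (Fin 3 → ℝ)) : ℝ :=
  H0 c1 c2 c3 c4 c5 c6 z + uc1 c1 c2 c7 z.1 * H1 c7 z + etac1 c5 z * (z.1 0 - 1)

/-! For `c₇ ≠ 0` the control term cancels the `p₁`-part of `H₀` and the multiplier term cancels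
`c₅ p₃ x₁`, so `H_{c₁} = c₁ p₁ (x₁ - 1) + c₃ p₂ x₃ + p₃ (c₄ + c₅ + c₆ x₃²)`. Along its flow,
`g₁ = x₁ - 1` and `p₁` therefore solve the scalar linear equations `ẏ = c₁ y` and `ẏ = -c₁ y`,
and vanish on all of `J` since they vanish at `0` (`e^{-a t} y(t)` has zero derivative on the
convex set `J`). Substituting `x₁ = 1` and `p₁ = 0` into Hamilton's equations gives the
state and adjoint equations of the boundary arc. -/

theorem Set.OrdConnected.eq_zero_of_hasDerivWithinAt_const_mul {J : Set ℝ} (hJ : J.OrdConnected)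
    {f : ℝ → ℝ} {a t₀ t : ℝ} (hf : ∀ s ∈ J, HasDerivWithinAt f (a * f s) J s)
    (ht₀ : t₀ ∈ J) (hf₀ : f t₀ = 0) (ht : t ∈ J) : f t = 0 := by
  let g : ℝ → ℝ := fun s => Real.exp (-a * s) * f s
  have hg : ∀ s ∈ J, HasDerivWithinAt g 0 J s := by
    intro s hs
    have he : HasDerivAt (fun s => Real.exp (-a * s)) (Real.exp (-a * s) * (-a * 1)) s :=
      ((hasDerivAt_id' s).const_mul (-a)).exp
    exact (he.hasDerivWithinAt.fun_mul (hf s hs)).congr_deriv (by ring)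
  have hconst : g t = g t₀ := by
    simpa [sub_eq_zero] using
      (convex_iff_ordConnected.mpr hJ).norm_image_sub_le_of_norm_hasDerivWithin_le
        (f' := fun _ => 0) (C := 0) hg (fun _ _ => by simp) ht₀ ht
  simpa [g, hf₀, Real.exp_ne_zero] using hconst

section

variable {c1 c2 c3 c4 c5 c6 c7 : ℝ}

theorem Hc1_eq (h7 : c7 ≠ 0) (z : (Fin 3 → ℝ) × (Fin 3 → ℝ)) :
    Hc1 c1 c2 c3 c4 c5 c6 c7 z =
      c1 * z.2 0 * (z.1 0 - 1) + c3 * z.2 1 * z.1 2 + z.2 2 * (c4 + c5 + c6 * z.1 2 ^ 2) := by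
  simp [Hc1, H0, H1, F0, uc1, etac1, Fin.sum_univ_three]
  field_simp
  ring

theorem Xham_Hc1 (h7 : c7 ≠ 0) (z : (Fin 3 → ℝ) × (Fin 3 → ℝ)) :
    Xham (Hc1 c1 c2 c3 c4 c5 c6 c7) z =
      (![c1 * (z.1 0 - 1), c3 * z.1 2, c4 + c5 + c6 * z.1 2 ^ 2],
       ![-(c1 * z.2 0), 0, -(c3 * z.2 1 + 2 * c6 * z.1 2 * z.2 2)]) := by
  have hx (i : Fin 3) : HasFDerivAt (fun z : (Fin 3 → ℝ) × (Fin 3 → ℝ) => z.1 i)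
      ((ContinuousLinearMap.proj i).comp (ContinuousLinearMap.fst ℝ _ _)) z :=
    hasFDerivAt_pi'.1 hasFDerivAt_fst i
  have hp (i : Fin 3) : HasFDerivAt (fun z : (Fin 3 → ℝ) × (Fin 3 → ℝ) => z.2 i)
      ((ContinuousLinearMap.proj i).comp (ContinuousLinearMap.snd ℝ _ _)) z :=
    hasFDerivAt_pi'.1 hasFDerivAt_snd i
  have hH : HasFDerivAt (fun z : (Fin 3 → ℝ) × (Fin 3 → ℝ) =>
      c1 * z.2 0 * (z.1 0 - 1) + c3 * z.2 1 * z.1 2 + z.2 2 * (c4 + c5 + c6 * z.1 2 ^ 2)) _ z :=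
    ((((hp 0).const_mul c1).mul ((hx 0).sub_const 1)).add
      (((hp 1).const_mul c3).mul (hx 2))).add
      ((hp 2).mul ((((hx 2).pow 2).const_mul c6).const_add (c4 + c5)))
  rw [show Hc1 c1 c2 c3 c4 c5 c6 c7 = _ from funext (Hc1_eq h7), Xham, hH.fderiv]
  ext i <;> fin_cases i <;> simp <;> ring

variable {J : Set ℝ} {z : ℝ → (Fin 3 → ℝ) × (Fin 3 → ℝ)} {t : ℝ}

theorem hasDerivWithinAt_coords_of_Xham_Hc1 (h7 : c7 ≠ 0)
    (hz : HasDerivWithinAt z (Xham (Hc1 c1 c2 c3 c4 c5 c6 c7) (z t)) J t) :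
    HasDerivWithinAt (fun s => (z s).1 0) (c1 * ((z t).1 0 - 1)) J t ∧
    HasDerivWithinAt (fun s => (z s).1 1) (c3 * (z t).1 2) J t ∧
    HasDerivWithinAt (fun s => (z s).1 2) (c4 + c5 + c6 * (z t).1 2 ^ 2) J t ∧
    HasDerivWithinAt (fun s => (z s).2 0) (-(c1 * (z t).2 0)) J t ∧
    HasDerivWithinAt (fun s => (z s).2 1) 0 J t ∧
    HasDerivWithinAt (fun s => (z s).2 2)
      (-(c3 * (z t).2 1 + 2 * c6 * (z t).1 2 * (z t).2 2)) J t := by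
  rw [Xham_Hc1 h7] at hz
  have hx := hasDerivWithinAt_pi.mp (hasFDerivAt_fst.comp_hasDerivWithinAt t hz)
  have hp := hasDerivWithinAt_pi.mp (hasFDerivAt_snd.comp_hasDerivWithinAt t hz)
  exact ⟨hx 0, hx 1, hx 2, hp 0, hp 1, hp 2⟩

end

theorem stmt17_general (c1 c2 c3 c4 c5 c6 c7 : ℝ)
    (h7 : 0 < c7)
    (J : Set ℝ) (hJ : J.OrdConnected) (h0J : (0:ℝ) ∈ J)
    (z : ℝ → (Fin 3 → ℝ) × (Fin 3 → ℝ))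
    (hz : ∀ t ∈ J, HasDerivWithinAt z (Xham (Hc1 c1 c2 c3 c4 c5 c6 c7) (z t)) J t)
    (hg0 : (z 0).1 0 - 1 = 0) (hH10 : H1 c7 (z 0) = 0) :
    ∀ t ∈ J,
      (z t).1 0 - 1 = 0 ∧
      H1 c7 (z t) = 0 ∧
      HasDerivWithinAt (fun s => (z s).1 0)
        (c1 * (z t).1 0 + c2 * (z t).1 2 + uc1 c1 c2 c7 (z t).1 * c7) J t ∧
      HasDerivWithinAt (fun s => (z s).1 1) (c3 * (z t).1 2) J t ∧
      HasDerivWithinAt (fun s => (z s).1 2)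
        (c4 + c5 * (z t).1 0 + c6 * ((z t).1 2) ^ 2) J t ∧
      HasDerivWithinAt (fun s => (z s).2 0)
        (-(c1 * (z t).2 0 + c5 * (z t).2 2) - etac1 c5 (z t) * 1) J t ∧
      HasDerivWithinAt (fun s => (z s).2 1) 0 J t ∧
      HasDerivWithinAt (fun s => (z s).2 2)
        (-(c2 * (z t).2 0 + c3 * (z t).2 1 + 2 * c6 * (z t).1 2 * (z t).2 2)
          - etac1 c5 (z t) * 0) J t := by
  have hode (t : ℝ) (ht : t ∈ J) := hasDerivWithinAt_coords_of_Xham_Hc1 h7.ne' (hz t ht)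
  have hg (t : ℝ) (ht : t ∈ J) : (z t).1 0 - 1 = 0 :=
    hJ.eq_zero_of_hasDerivWithinAt_const_mul (f := fun s => (z s).1 0 - 1)
      (fun s hs => (hode s hs).1.sub_const 1) h0J hg0 ht
  have hp₀ (t : ℝ) (ht : t ∈ J) : (z t).2 0 = 0 :=
    hJ.eq_zero_of_hasDerivWithinAt_const_mul (f := fun s => (z s).2 0) (a := -c1)
      (fun s hs => (hode s hs).2.2.2.1.congr_deriv (by ring))
      h0J ((mul_eq_zero.mp hH10).resolve_left h7.ne') ht
  intro t ht
  obtain ⟨hx0, hx1, hx2, hp0, hp1, hp2⟩ := hode t ht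
  refine ⟨hg t ht, by simp [H1, hp₀ t ht], hx0.congr_deriv ?_, hx1,
    hx2.congr_deriv ?_, hp0.congr_deriv ?_, hp1, hp2.congr_deriv ?_⟩
  · rw [uc1, div_mul_cancel₀ _ h7.ne']
    ring
  · linear_combination (-c5) * hg t ht
  · rw [etac1]
    ring
  · rw [etac1, hp₀ t ht]
    ring

/-- Invariance for the order-1 boundary Hamiltonian: a solution of
`ż = X_{H_{c₁}}(z)` starting on `{g₁ = 0} ∩ {H₁ = 0}` stays there, and along it
the trajectory solves `ẋ = F₀(x) + u_{c₁}(x)F₁(x)` while `p` solves the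
constrained adjoint equation with multiplier `η_{c₁}`, so it is a boundary
extremal of the state-constrained problem. -/
theorem stmt17 (c1 c2 c3 c4 c5 c6 c7 : ℝ)
    (h1 : c1 < 0) (h2 : c2 < 0) (h3 : 0 < c3) (h4 : c4 < 0)
    (h5 : 0 < c5) (h6 : c6 < 0) (h7 : 0 < c7)
    (J : Set ℝ) (hJ : J.OrdConnected) (h0J : (0:ℝ) ∈ J)
    (z : ℝ → (Fin 3 → ℝ) × (Fin 3 → ℝ))
    (hz : ∀ t ∈ J, HasDerivWithinAt z (Xham (Hc1 c1 c2 c3 c4 c5 c6 c7) (z t)) J t)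
    (hg0 : (z 0).1 0 - 1 = 0) (hH10 : H1 c7 (z 0) = 0) :
    ∀ t ∈ J,
      (z t).1 0 - 1 = 0 ∧
      H1 c7 (z t) = 0 ∧
      HasDerivWithinAt (fun s => (z s).1 0)
        (c1 * (z t).1 0 + c2 * (z t).1 2 + uc1 c1 c2 c7 (z t).1 * c7) J t ∧
      HasDerivWithinAt (fun s => (z s).1 1) (c3 * (z t).1 2) J t ∧
      HasDerivWithinAt (fun s => (z s).1 2)
        (c4 + c5 * (z t).1 0 + c6 * ((z t).1 2) ^ 2) J t ∧
      HasDerivWithinAt (fun s => (z s).2 0)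
        (-(c1 * (z t).2 0 + c5 * (z t).2 2) - etac1 c5 (z t) * 1) J t ∧
      HasDerivWithinAt (fun s => (z s).2 1) 0 J t ∧
      HasDerivWithinAt (fun s => (z s).2 2)
        (-(c2 * (z t).2 0 + c3 * (z t).2 1 + 2 * c6 * (z t).1 2 * (z t).2 2)
          - etac1 c5 (z t) * 0) J t :=
  stmt17_general c1 c2 c3 c4 c5 c6 c7 h7 J hJ h0J z hz hg0 hH10
end
end

section
/- Invariance for the order-2 boundary Hamiltonian: define on ℝ³×ℝ³ the true Hamiltonian H_{c₃}(x,p) = H₀(x,p) + u_{c₃}H₁(x,p) + η_{c₃}(x,p)g₃(x), where g₃(x) = x₃ − 1, u_{c₃} = −(−c₁(c₄+c₆)/c₅ + c₂)/c₇ is a constant, and η_{c₃}(x,p) = −c₃p₂ (c₃ denoting the constant). Let z(·) = (x(·),p(·)) solve ż = X_{H_{c₃}}(z) on an interval J containing 0. (i) If g₃(x(0)) = 0 and (F₀·g₃)(x(0)) = c₄ + c₅x₁(0) + c₆x₃(0)² = 0, then g₃(x(t)) = 0 and (F₀·g₃)(x(t)) = 0 for all t ∈ J, and z(·) with control u_{c₃}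 and multiplier η_{c₃}∘z is an extremal of the state-constrained problem. (ii) If in addition H₁(z(0)) = 0 and H₀₁(z(0)) = 0, then H₁(z(t)) = 0 and H₀₁(z(t)) = 0 for all t ∈ J. -/
noncomputable section

/-- `H₀₁(x,p) = ⟨p, [F₀,F₁](x)⟩ = −c₇(c₁p₁ + c₅p₃)`. -/
def H01 (c1 c5 c7 : ℝ) (z : (Fin 3 → ℝ) × (Fin 3 → ℝ)) : ℝ :=
  -(c7 * (c1 * z.2 0 + c5 * z.2 2))

/-- Constant feedback boundary control of the order-2 constraint
`g₃(x) = x₃ − 1`. -/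
def uc3 (c1 c2 c4 c5 c6 c7 : ℝ) : ℝ := -(-(c1 * (c4 + c6)) / c5 + c2) / c7

/-- Multiplier of the order-2 constraint. -/
def etac3 (c3 : ℝ) (z : (Fin 3 → ℝ) × (Fin 3 → ℝ)) : ℝ := -(c3 * z.2 1)

/-- True Hamiltonian of the order-2 boundary arc:
`H_{c₃} = H₀ + u_{c₃}H₁ + η_{c₃} g₃`. -/
def Hc3 (c1 c2 c3 c4 c5 c6 c7 : ℝ) (z : (Fin 3 → ℝ) × (Fin 3 → ℝ)) : ℝ :=
  H0 c1 c2 c3 c4 c5 c6 z + uc3 c1 c2 c4 c5 c6 c7 * H1 c7 z + etac3 c3 z * (z.1 2 - 1)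

/-!
Along the flow of `H_{c₃}` the pair `(g₃, F₀·g₃)` solves a linear time-dependent ODE with
derivative `(F₀·g₃, (c₁ + 2c₆x₃) F₀·g₃ + (c₂c₅ − c₁c₆(x₃ + 1)) g₃)`: the constant control
`u_{c₃}` is chosen exactly so that no inhomogeneous term survives. Likewise `(p₁, p₃)` solves
a linear ODE whose coefficients depend continuously on `x₃`. By Grönwall's inequality a
solution of a linear ODE with continuous coefficients that vanishes at one time vanishes on
the whole interval; this gives both invariance statements, as `H₁ = c₇p₁` and
`H₀₁ = −c₇(c₁p₁ + c₅p₃)`.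
-/

open Set

section Gronwall

variable {E : Type*} [NormedAddCommGroup E] [NormedSpace ℝ E] {f f' : ℝ → E} {g : ℝ → ℝ}
  {J : Set ℝ} {t₀ : ℝ}

theorem Set.OrdConnected.eq_zero_of_norm_deriv_le_mul_norm_of_le (hJ : J.OrdConnected)
    (hg : ContinuousOn g J) (hf : ∀ t ∈ J, HasDerivWithinAt f (f' t) J t)
    (bound : ∀ t ∈ J, ‖f' t‖ ≤ g t * ‖f t‖) (ht₀ : t₀ ∈ J) (h₀ : f t₀ = 0) :
    ∀ t ∈ J, t₀ ≤ t → f t = 0 := by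
  intro t ht hle
  have hsub : Icc t₀ t ⊆ J := hJ.out ht₀ ht
  obtain ⟨K, hK⟩ := isCompact_Icc.exists_bound_of_continuousOn (hg.mono hsub)
  refine eq_zero_of_abs_deriv_le_mul_abs_self_of_eq_zero_right (f' := f') (K := K)
    (fun s hs => (hf s (hsub hs)).continuousWithinAt.mono hsub) (fun s hs => ?_) h₀
    (fun s hs => ?_) t ⟨hle, le_rfl⟩
  · exact (hf s (hsub (Ico_subset_Icc_self hs))).mono_of_mem_nhdsWithin
      (hJ.mem_nhdsGE (hsub (Ico_subset_Icc_self hs)) ht hs.2)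
  · have hs' := Ico_subset_Icc_self hs
    calc ‖f' s‖ ≤ g s * ‖f s‖ := bound s (hsub hs')
      _ ≤ K * ‖f s‖ := by gcongr; exact (le_abs_self _).trans (hK s hs')

theorem Set.OrdConnected.eq_zero_of_norm_deriv_le_mul_norm (hJ : J.OrdConnected)
    (hg : ContinuousOn g J) (hf : ∀ t ∈ J, HasDerivWithinAt f (f' t) J t)
    (bound : ∀ t ∈ J, ‖f' t‖ ≤ g t * ‖f t‖) (ht₀ : t₀ ∈ J) (h₀ : f t₀ = 0) :
    ∀ t ∈ J, f t = 0 := by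
  intro t ht
  rcases le_total t₀ t with hle | hle
  · exact hJ.eq_zero_of_norm_deriv_le_mul_norm_of_le hg hf bound ht₀ h₀ t ht hle
  · have hJ' : (Neg.neg ⁻¹' J).OrdConnected := hJ.preimage_anti fun _ _ => neg_le_neg
    have hf' : ∀ s ∈ Neg.neg ⁻¹' J,
        HasDerivWithinAt (fun s => f (-s)) (-f' (-s)) (Neg.neg ⁻¹' J) s := by
      intro s hs
      simpa [Function.comp_def] using
        (hf (-s) hs).scomp s (hasDerivWithinAt_neg s _) (mapsTo_preimage _ _)
    simpa using hJ'.eq_zero_of_norm_deriv_le_mul_norm_of_le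
      (hg.comp continuousOn_neg (mapsTo_preimage _ _)) hf'
      (fun s hs => by simpa using bound (-s) hs) (by simpa using ht₀) (by simpa using h₀) (-t) (by simpa using ht) (neg_le_neg hle)

end Gronwall

theorem norm_linear_prod_le (a b c d u v : ℝ) :
    ‖(a * u + b * v, c * u + d * v)‖ ≤ (|a| + |b| + |c| + |d|) * ‖(u, v)‖ := by
  have hu : |u| ≤ ‖(u, v)‖ := norm_fst_le (u, v)
  have hv : |v| ≤ ‖(u, v)‖ := norm_snd_le (u, v)
  have h1 : |a * u + b * v| ≤ (|a| + |b|) * ‖(u, v)‖ := by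
    calc |a * u + b * v| ≤ |a| * |u| + |b| * |v| := by
          rw [← abs_mul, ← abs_mul]; exact abs_add_le _ _
      _ ≤ (|a| + |b|) * ‖(u, v)‖ := by rw [add_mul]; gcongr
  have h2 : |c * u + d * v| ≤ (|c| + |d|) * ‖(u, v)‖ := by
    calc |c * u + d * v| ≤ |c| * |u| + |d| * |v| := by
          rw [← abs_mul, ← abs_mul]; exact abs_add_le _ _
      _ ≤ (|c| + |d|) * ‖(u, v)‖ := by rw [add_mul]; gcongr
  rw [Prod.norm_def, Real.norm_eq_abs, Real.norm_eq_abs]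
  refine max_le ?_ ?_ <;>
    nlinarith [norm_nonneg (u, v), abs_nonneg a, abs_nonneg b, abs_nonneg c, abs_nonneg d]

theorem Set.OrdConnected.eq_zero_of_linear_ode {J : Set ℝ} (hJ : J.OrdConnected)
    {u v a b c d : ℝ → ℝ} (ha : ContinuousOn a J) (hb : ContinuousOn b J)
    (hc : ContinuousOn c J) (hd : ContinuousOn d J)
    (hu : ∀ t ∈ J, HasDerivWithinAt u (a t * u t + b t * v t) J t)
    (hv : ∀ t ∈ J, HasDerivWithinAt v (c t * u t + d t * v t) J t)
    {t₀ : ℝ} (ht₀ : t₀ ∈ J) (hu₀ : u t₀ = 0) (hv₀ : v t₀ = 0) :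
    ∀ t ∈ J, u t = 0 ∧ v t = 0 := by
  have hg : ContinuousOn (fun t => |a t| + |b t| + |c t| + |d t|) J :=
    ((ha.abs.add hb.abs).add hc.abs).add hd.abs
  intro t ht
  simpa using hJ.eq_zero_of_norm_deriv_le_mul_norm (f := fun t => (u t, v t)) hg
    (fun s hs => (hu s hs).prodMk (hv s hs)) (fun s _ => norm_linear_prod_le ..) ht₀
    (by simp [hu₀, hv₀]) t ht

local notation "ℝ³×ℝ³" => (Fin 3 → ℝ) × (Fin 3 → ℝ)

def xCoord (i : Fin 3) : ℝ³×ℝ³ →L[ℝ] ℝ :=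
  (ContinuousLinearMap.proj i).comp (ContinuousLinearMap.fst ℝ _ _)

def pCoord (i : Fin 3) : ℝ³×ℝ³ →L[ℝ] ℝ :=
  (ContinuousLinearMap.proj i).comp (ContinuousLinearMap.snd ℝ _ _)

@[simp] theorem xCoord_apply (i : Fin 3) (w : ℝ³×ℝ³) : xCoord i w = w.1 i := rfl
@[simp] theorem pCoord_apply (i : Fin 3) (w : ℝ³×ℝ³) : pCoord i w = w.2 i := rfl

theorem Hc3_apply (c1 c2 c3 c4 c5 c6 c7 : ℝ) (w : ℝ³×ℝ³) :
    Hc3 c1 c2 c3 c4 c5 c6 c7 w =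
      w.2 0 * (c1 * w.1 0 + c2 * w.1 2 + uc3 c1 c2 c4 c5 c6 c7 * c7) + c3 * w.2 1
        + w.2 2 * (c4 + c5 * w.1 0 + c6 * w.1 2 ^ 2) := by
  simp only [Hc3, H0, F0, H1, etac3, Fin.sum_univ_three]
  simp
  ring

theorem hasFDerivAt_Hc3 (c1 c2 c3 c4 c5 c6 c7 : ℝ) (z : ℝ³×ℝ³) :
    HasFDerivAt (Hc3 c1 c2 c3 c4 c5 c6 c7)
      ((c1 * z.2 0 + c5 * z.2 2) • xCoord 0 + (c2 * z.2 0 + 2 * c6 * z.1 2 * z.2 2) • xCoord 2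
        + (c1 * z.1 0 + c2 * z.1 2 + uc3 c1 c2 c4 c5 c6 c7 * c7) • pCoord 0 + c3 • pCoord 1
        + (c4 + c5 * z.1 0 + c6 * z.1 2 ^ 2) • pCoord 2) z := by
  have hx (i : Fin 3) : HasFDerivAt (fun w : ℝ³×ℝ³ => w.1 i) (xCoord i) z :=
    (xCoord i).hasFDerivAt
  have hp (i : Fin 3) : HasFDerivAt (fun w : ℝ³×ℝ³ => w.2 i) (pCoord i) z :=
    (pCoord i).hasFDerivAt
  have H := (((hp 0).mul ((((hx 0).const_mul c1).add ((hx 2).const_mul c2)).add_const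
    (uc3 c1 c2 c4 c5 c6 c7 * c7))).add ((hp 1).const_mul c3)).add
    ((hp 2).mul ((((hx 0).const_mul c5).const_add c4).add (((hx 2).pow 2).const_mul c6)))
  refine (H.congr_fderiv ?_).congr_of_eventuallyEq (.of_forall fun w => Hc3_apply ..)
  ext v <;> simp
  ring

theorem Xham_Hc3 (c1 c2 c3 c4 c5 c6 c7 : ℝ) (z : ℝ³×ℝ³) :
    Xham (Hc3 c1 c2 c3 c4 c5 c6 c7) z =
      (![c1 * z.1 0 + c2 * z.1 2 + uc3 c1 c2 c4 c5 c6 c7 * c7, c3,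
          c4 + c5 * z.1 0 + c6 * z.1 2 ^ 2],
        ![-(c1 * z.2 0 + c5 * z.2 2), 0, -(c2 * z.2 0 + 2 * c6 * z.1 2 * z.2 2)]) := by
  simp only [Xham, (hasFDerivAt_Hc3 c1 c2 c3 c4 c5 c6 c7 z).fderiv]
  ext i <;> fin_cases i <;> simp

theorem HasDerivWithinAt.coords {z : ℝ → ℝ³×ℝ³} {w : ℝ³×ℝ³} {J : Set ℝ} {t : ℝ}
    (h : HasDerivWithinAt z w J t) (i : Fin 3) :
    HasDerivWithinAt (fun s => (z s).1 i) (w.1 i) J t ∧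
      HasDerivWithinAt (fun s => (z s).2 i) (w.2 i) J t :=
  ⟨(xCoord i).hasFDerivAt.comp_hasDerivWithinAt t h,
    (pCoord i).hasFDerivAt.comp_hasDerivWithinAt t h⟩

theorem Set.OrdConnected.constraint_invariant {J : Set ℝ} (hJ : J.OrdConnected)
    {c1 c2 c4 c5 c6 w : ℝ} (hw : c5 * w = c1 * (c4 + c6) - c2 * c5) {x1 x3 : ℝ → ℝ}
    (hx1 : ∀ t ∈ J, HasDerivWithinAt x1 (c1 * x1 t + c2 * x3 t + w) J t)
    (hx3 : ∀ t ∈ J, HasDerivWithinAt x3 (c4 + c5 * x1 t + c6 * x3 t ^ 2) J t)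
    {t₀ : ℝ} (ht₀ : t₀ ∈ J) (hg₀ : x3 t₀ - 1 = 0)
    (hFg₀ : c4 + c5 * x1 t₀ + c6 * x3 t₀ ^ 2 = 0) :
    ∀ t ∈ J, x3 t - 1 = 0 ∧ c4 + c5 * x1 t + c6 * x3 t ^ 2 = 0 := by
  have hx3c : ContinuousOn x3 J := fun t ht => (hx3 t ht).continuousWithinAt
  refine hJ.eq_zero_of_linear_ode (a := 0) (b := 1)
    (c := fun t => c2 * c5 - c1 * c6 * (x3 t + 1)) (d := fun t => c1 + 2 * c6 * x3 t)
    continuousOn_const continuousOn_const (by fun_prop) (by fun_prop)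
    (fun t ht => ?_) (fun t ht => ?_) ht₀ hg₀ hFg₀
  · simpa using (hx3 t ht).sub_const 1
  · refine ((((hx1 t ht).const_mul c5).const_add c4).add
      (((hx3 t ht).pow 2).const_mul c6)).congr_deriv ?_
    linear_combination hw

theorem Set.OrdConnected.costate_invariant {J : Set ℝ} (hJ : J.OrdConnected)
    {c1 c2 c5 c6 : ℝ} {p1 p3 x3 : ℝ → ℝ} (hx3 : ContinuousOn x3 J)
    (hp1 : ∀ t ∈ J, HasDerivWithinAt p1 (-(c1 * p1 t + c5 * p3 t)) J t)
    (hp3 : ∀ t ∈ J, HasDerivWithinAt p3 (-(c2 * p1 t + 2 * c6 * x3 t * p3 t)) J t)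
    {t₀ : ℝ} (ht₀ : t₀ ∈ J) (hp1₀ : p1 t₀ = 0) (hp3₀ : p3 t₀ = 0) :
    ∀ t ∈ J, p1 t = 0 ∧ p3 t = 0 :=
  hJ.eq_zero_of_linear_ode (a := fun _ => -c1) (b := fun _ => -c5) (c := fun _ => -c2)
    (d := fun t => -(2 * c6 * x3 t)) continuousOn_const continuousOn_const continuousOn_const
    (by fun_prop) (fun t ht => (hp1 t ht).congr_deriv (by ring))
    (fun t ht => (hp3 t ht).congr_deriv (by ring)) ht₀ hp1₀ hp3₀

theorem stmt18_general (c1 c2 c3 c4 c5 c6 c7 : ℝ)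
    (h5 : 0 < c5) (h7 : 0 < c7)
    (J : Set ℝ) (hJ : J.OrdConnected) (h0J : (0:ℝ) ∈ J)
    (z : ℝ → (Fin 3 → ℝ) × (Fin 3 → ℝ))
    (hz : ∀ t ∈ J, HasDerivWithinAt z (Xham (Hc3 c1 c2 c3 c4 c5 c6 c7) (z t)) J t) :
    ((z 0).1 2 - 1 = 0 →
      c4 + c5 * (z 0).1 0 + c6 * ((z 0).1 2) ^ 2 = 0 →
      ∀ t ∈ J,
        (z t).1 2 - 1 = 0 ∧
        c4 + c5 * (z t).1 0 + c6 * ((z t).1 2) ^ 2 = 0 ∧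
        HasDerivWithinAt (fun s => (z s).1 0)
          (c1 * (z t).1 0 + c2 * (z t).1 2 + uc3 c1 c2 c4 c5 c6 c7 * c7) J t ∧
        HasDerivWithinAt (fun s => (z s).1 1) (c3 * (z t).1 2) J t ∧
        HasDerivWithinAt (fun s => (z s).1 2)
          (c4 + c5 * (z t).1 0 + c6 * ((z t).1 2) ^ 2) J t ∧
        HasDerivWithinAt (fun s => (z s).2 0)
          (-(c1 * (z t).2 0 + c5 * (z t).2 2)) J t ∧
        HasDerivWithinAt (fun s => (z s).2 1) 0 J t ∧
        HasDerivWithinAt (fun s => (z s).2 2)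
          (-(c2 * (z t).2 0 + c3 * (z t).2 1 + 2 * c6 * (z t).1 2 * (z t).2 2)
            - etac3 c3 (z t) * 1) J t) ∧
    ((z 0).1 2 - 1 = 0 →
      c4 + c5 * (z 0).1 0 + c6 * ((z 0).1 2) ^ 2 = 0 →
      H1 c7 (z 0) = 0 → H01 c1 c5 c7 (z 0) = 0 →
      ∀ t ∈ J, H1 c7 (z t) = 0 ∧ H01 c1 c5 c7 (z t) = 0) := by
  have flow (t : ℝ) (ht : t ∈ J) (i : Fin 3) := (hz t ht).coords i
  simp only [Xham_Hc3] at flow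
  have hw : c5 * (uc3 c1 c2 c4 c5 c6 c7 * c7) = c1 * (c4 + c6) - c2 * c5 := by
    simp only [uc3]; field_simp; ring
  constructor
  · intro hg₀ hFg₀ t ht
    obtain ⟨hg, hFg⟩ := hJ.constraint_invariant hw (fun t ht => (flow t ht 0).1)
      (fun t ht => (flow t ht 2).1) h0J hg₀ hFg₀ t ht
    refine ⟨hg, hFg, (flow t ht 0).1, ?_, (flow t ht 2).1, (flow t ht 0).2, (flow t ht 1).2, ?_⟩
    · simpa [show (z t).1 2 = 1 by linarith] using (flow t ht 1).1
    · exact (flow t ht 2).2.congr_deriv (by simp [etac3]; ring)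
  · intro _ _ hH1 hH01 t ht
    have hx3 : ContinuousOn (fun t => (z t).1 2) J := fun t ht =>
      (flow t ht 2).1.continuousWithinAt
    have hp1₀ : (z 0).2 0 = 0 := by simpa [H1, h7.ne'] using hH1
    have hp3₀ : (z 0).2 2 = 0 := by simpa [H01, hp1₀, h5.ne', h7.ne'] using hH01
    obtain ⟨hp1, hp3⟩ := hJ.costate_invariant hx3 (fun t ht => (flow t ht 0).2)
      (fun t ht => (flow t ht 2).2) h0J hp1₀ hp3₀ t ht
    simp [H1, H01, hp1, hp3]

/-- Invariance for the order-2 boundary Hamiltonian: (i) a solution of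
`ż = X_{H_{c₃}}(z)` starting on `{g₃ = 0} ∩ {F₀·g₃ = 0}` stays there and is an
extremal of the state-constrained problem (with constant control `u_{c₃}` and
multiplier `η_{c₃}`); (ii) if moreover `H₁ = H₀₁ = 0` initially, then
`H₁ ≡ H₀₁ ≡ 0` along the solution. -/
theorem stmt18 (c1 c2 c3 c4 c5 c6 c7 : ℝ)
    (h1 : c1 < 0) (h2 : c2 < 0) (h3 : 0 < c3) (h4 : c4 < 0)
    (h5 : 0 < c5) (h6 : c6 < 0) (h7 : 0 < c7)
    (J : Set ℝ) (hJ : J.OrdConnected) (h0J : (0:ℝ) ∈ J)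
    (z : ℝ → (Fin 3 → ℝ) × (Fin 3 → ℝ))
    (hz : ∀ t ∈ J, HasDerivWithinAt z (Xham (Hc3 c1 c2 c3 c4 c5 c6 c7) (z t)) J t) :
    ((z 0).1 2 - 1 = 0 →
      c4 + c5 * (z 0).1 0 + c6 * ((z 0).1 2) ^ 2 = 0 →
      ∀ t ∈ J,
        (z t).1 2 - 1 = 0 ∧
        c4 + c5 * (z t).1 0 + c6 * ((z t).1 2) ^ 2 = 0 ∧
        HasDerivWithinAt (fun s => (z s).1 0)
          (c1 * (z t).1 0 + c2 * (z t).1 2 + uc3 c1 c2 c4 c5 c6 c7 * c7) J t ∧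
        HasDerivWithinAt (fun s => (z s).1 1) (c3 * (z t).1 2) J t ∧
        HasDerivWithinAt (fun s => (z s).1 2)
          (c4 + c5 * (z t).1 0 + c6 * ((z t).1 2) ^ 2) J t ∧
        HasDerivWithinAt (fun s => (z s).2 0)
          (-(c1 * (z t).2 0 + c5 * (z t).2 2)) J t ∧
        HasDerivWithinAt (fun s => (z s).2 1) 0 J t ∧
        HasDerivWithinAt (fun s => (z s).2 2)
          (-(c2 * (z t).2 0 + c3 * (z t).2 1 + 2 * c6 * (z t).1 2 * (z t).2 2)
            - etac3 c3 (z t) * 1) J t) ∧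
    ((z 0).1 2 - 1 = 0 →
      c4 + c5 * (z 0).1 0 + c6 * ((z 0).1 2) ^ 2 = 0 →
      H1 c7 (z 0) = 0 → H01 c1 c5 c7 (z 0) = 0 →
      ∀ t ∈ J, H1 c7 (z t) = 0 ∧ H01 c1 c5 c7 (z t) = 0) :=
  stmt18_general c1 c2 c3 c4 c5 c6 c7 h5 h7 J hJ h0J z hz
end
end
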